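/- Let p be an odd prime, γ a self-conjugate p-core, and B_γ the block of partitions of |γ| + 2p with p-core γ. For every 0 ≤ l ≤ p−1, any two partitions in ∂_l are comparable in the dominance order; that is, ∂_l is totally ordered by ⊴. -/

import Mathlib

/-!
Work on the `N`-bead abacus of the `p`-core `γ`, with beta-set `B`. Since `γ` is a `p`-core,
`B` is closed under `b ↦ b - p`: a bead `b` above an empty position `b - p` would give a hook of
length `p`. A partition `λ` of `∂_l` arises from `γ` by adding two `p`-rim-hooks, and as
multisets `B_N(λ) + {a, b} = B + {a + p, b + p}` for some `a < b`. Summing `(x - t)₊` over the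
beads then shows `λ ⊴ μ` whenever the pairs satisfy `a ≤ a'` and `b ≤ b'`.

The other case, `a < a' < b' < b`, is impossible: expressing the leg lengths through the top
beads of the runners gives `l = #{top beads strictly between a and b} + [a + p < b]`, and this
grows strictly when the pair is nested inside another.
-/

namespace ArxivW2

/-- A partition of a natural number, given by its (weakly decreasing, finitely
supported) sequence of parts, `part i` being the `(i+1)`-st part. -/
structure PartitionNat : Type where
  part : ℕ → ℕ
  antitone : Antitone part
  finite_support : (Function.support part).Finite

namespace PartitionNat

/-- The rank `|λ|` of a partition: the sum of its parts. -/
noncomputable def size (μ : PartitionNat) : ℕ := ∑ᶠ i, μ.part i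

/-- The number of nonzero parts of a partition. -/
noncomputable def len (μ : PartitionNat) : ℕ := (Function.support μ.part).ncard

/-- The `(j+1)`-st part of the conjugate partition: `λ'_{j+1} = #{i : λ_i ≥ j+1}`. -/
noncomputable def conj (μ : PartitionNat) (j : ℕ) : ℕ := {i : ℕ | j + 1 ≤ μ.part i}.ncard

/-- A partition is self-conjugate if it equals its conjugate. -/
def SelfConj (μ : PartitionNat) : Prop := ∀ j, μ.part j = μ.conj j

/-- `(i, j)` (0-indexed) is a node of the Young diagram of `μ`. -/
def IsNode (μ : PartitionNat) (i j : ℕ) : Prop := j < μ.part i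

/-- The hook length of the (0-indexed) node `(i,j)`:
`h = λ_{i+1} + λ'_{j+1} − (i+1) − (j+1) + 1`. -/
noncomputable def hook (μ : PartitionNat) (i j : ℕ) : ℕ := μ.part i + μ.conj j - (i + j + 1)

/-- A partition is a `p`-core if no hook length of a node is divisible by `p`. -/
def IsCore (p : ℕ) (μ : PartitionNat) : Prop := ∀ i j, μ.IsNode i j → ¬ p ∣ μ.hook i j

/-- The `p`-weight of a partition: the number of nodes whose hook length is
divisible by `p`. -/
noncomputable def pweight (p : ℕ) (μ : PartitionNat) : ℕ :=
  {x : ℕ × ℕ | μ.IsNode x.1 x.2 ∧ p ∣ μ.hook x.1 x.2}.ncard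

/-- The `N`-bead beta-set `B_N(λ) = {λ_i + N − i : 1 ≤ i ≤ N}` of a partition
(meaningful when `N ≥ len λ`). -/
def betaSet (N : ℕ) (μ : PartitionNat) : Finset ℕ :=
  (Finset.range N).image fun i => μ.part i + (N - 1 - i)

/-- A partition is `p`-regular if no nonzero part is repeated `p` or more times. -/
def Regular (p : ℕ) (μ : PartitionNat) : Prop :=
  ∀ i, μ.part i ≠ 0 → μ.part (i + p - 1) < μ.part i

end PartitionNat

open PartitionNat

/-- `γ` is the `p`-core of `lam`: `γ` is a `p`-core, and for some `N` at least the
number of parts of both, the `N`-bead beta-sets of `lam` and `γ` have the same number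
of elements in each residue class mod `p`. -/
def HasCore (p : ℕ) (lam gam : PartitionNat) : Prop :=
  IsCore p gam ∧ ∃ N : ℕ, lam.len ≤ N ∧ gam.len ≤ N ∧ ∀ r : ℕ,
    ((betaSet N lam).filter fun b => b % p = r).card =
      ((betaSet N gam).filter fun b => b % p = r).card

/-- Membership in the `p`-block of weight `w` with `p`-core `gam`. -/
def InBlock (p w : ℕ) (gam lam : PartitionNat) : Prop :=
  lam.size = gam.size + w * p ∧ HasCore p lam gam

/-- The dominance order: `lam ⊴ mu`. -/
def Dom (lam mu : PartitionNat) : Prop :=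
  ∀ k : ℕ, ∑ i ∈ Finset.range k, lam.part i ≤ ∑ i ∈ Finset.range k, mu.part i

/-- `mu` is obtained from `lam` by removing a `p`-rim-hook of leg length `l`. -/
def RemoveHook (p : ℕ) (lam mu : PartitionNat) (l : ℕ) : Prop :=
  ∃ N b : ℕ, lam.len ≤ N ∧ mu.len ≤ N ∧ b ∈ betaSet N lam ∧ p ≤ b ∧
    b - p ∉ betaSet N lam ∧
    betaSet N mu = insert (b - p) (betaSet N lam \ {b}) ∧
    l = ((betaSet N lam).filter fun x => b - p < x ∧ x < b).card

/-- `lam` belongs to the set `∂_l` of the weight-2 block of `gam`: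
it lies in the block and some (equivalently, every) two-step `p`-rim-hook removal
sequence from `lam` down to `gam` has leg lengths `l₁, l₂` with `|l₁ − l₂| = l`. -/
def DelClass (p : ℕ) (gam : PartitionNat) (l : ℕ) (lam : PartitionNat) : Prop :=
  InBlock p 2 gam lam ∧ ∃ mu l1 l2, RemoveHook p lam mu l1 ∧ RemoveHook p mu gam l2 ∧
    max l1 l2 - min l1 l2 = l

/-- `ρ 0 < ρ 1 < ⋯ < ρ (p−1)` is the increasing enumeration of the maxima of the
residue classes mod `p` in the `N`-bead beta-set of `gam`. -/
def IsRho (p N : ℕ) (gam : PartitionNat) (ρ : ℕ → ℕ) : Prop :=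
  (∀ i j, i < j → j < p → ρ i < ρ j) ∧
  (∀ i, i < p → ρ i ∈ betaSet N gam ∧ ∀ b ∈ betaSet N gam, b % p = ρ i % p → b ≤ ρ i) ∧
  (∀ r, r < p → ∃ i, i < p ∧ ρ i % p = r)

/-- The beta-set of the partition `⟨i,j⟩` (`i < j`). -/
def pairBeta (p : ℕ) (B : Finset ℕ) (ρ : ℕ → ℕ) (i j : ℕ) : Finset ℕ :=
  (B \ {ρ i, ρ j}) ∪ {ρ i + p, ρ j + p}

/-- The beta-set of the partition `⟨i⟩`. -/
def oneBeta (p : ℕ) (B : Finset ℕ) (ρ : ℕ → ℕ) (i : ℕ) : Finset ℕ :=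
  (B \ {ρ i}) ∪ {ρ i + 2 * p}

/-- The beta-set of the partition `⟨i²⟩`. -/
def sqBeta (p : ℕ) (B : Finset ℕ) (ρ : ℕ → ℕ) (i : ℕ) : Finset ℕ :=
  (B \ {ρ i - p}) ∪ {ρ i + p}

/-- The pyramid entry `γ_{ij}` of the block, extended by `1` for `i > j` and `0`
for `j ≥ p`. -/
def pyr (p : ℕ) (ρ : ℕ → ℕ) (i j : ℕ) : ℕ :=
  if j < i then 1 else if p ≤ j then 0 else if ρ j - ρ i < p then 1 else 0

/-- The beta-set of Fayers' partition `⌈i,j⌋` (for `0 ≤ i ≤ j ≤ p−1`, `i < p−1`),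
defined by cases on the pyramid entries. -/
def fayersBeta (p : ℕ) (B : Finset ℕ) (ρ : ℕ → ℕ) (i j : ℕ) : Finset ℕ :=
  if i = j then
    (if pyr p ρ (i + 1) (i + 2) = 1 then pairBeta p B ρ (i + 1) (i + 2)
     else oneBeta p B ρ (i + 1))
  else
    if pyr p ρ i (j + 1) = 1 then pairBeta p B ρ i (j + 1)
    else if pyr p ρ i j = 1 then oneBeta p B ρ i
    else if pyr p ρ (i + 1) j = 1 then sqBeta p B ρ j
    else pairBeta p B ρ (i + 1) j

/-- The set of `p`-BG-partitions in the block of weight `w` with core `gam`: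
self-conjugate partitions in the block none of whose diagonal hook lengths is
divisible by `p`. -/
def BGset (p w : ℕ) (gam : PartitionNat) : Set PartitionNat :=
  {lam | InBlock p w gam lam ∧ SelfConj lam ∧ ∀ i, lam.IsNode i i → ¬ p ∣ lam.hook i i}

open Finset

namespace PartitionNat

variable {N : ℕ} (μ : PartitionNat)

def bead (N i : ℕ) : ℕ := μ.part i + (N - 1 - i)

lemma lt_len_of_part_ne_zero {i : ℕ} (h : μ.part i ≠ 0) : i < μ.len := by
  have hsub : (range (i + 1) : Set ℕ) ⊆ Function.support μ.part := fun j hj => by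
    have := μ.antitone (Nat.le_of_lt_succ (by simpa using hj))
    simp only [Function.mem_support]
    omega
  have := Set.ncard_le_ncard hsub μ.finite_support
  rw [Set.ncard_coe_finset, card_range] at this
  exact this

lemma part_eq_zero_of_len_le {i : ℕ} (hi : μ.len ≤ i) : μ.part i = 0 := by
  by_contra h
  exact absurd (μ.lt_len_of_part_ne_zero h) (by omega)

variable {μ}

lemma bead_antitone : Antitone (μ.bead N) := fun i j hij => by
  have := μ.antitone hij
  unfold bead
  omega

lemma bead_lt_bead {i j : ℕ} (hj : j < N) (hij : i < j) : μ.bead N j < μ.bead N i := by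
  have := μ.antitone hij.le
  unfold bead
  omega

lemma bead_injOn : Set.InjOn (μ.bead N) (range N) := by
  intro i hi j hj hij
  simp only [coe_range, Set.mem_Iio] at hi hj
  rcases lt_trichotomy i j with h | h | h
  · exact absurd hij (bead_lt_bead hj h).ne'
  · exact h
  · exact absurd hij (bead_lt_bead hi h).ne

lemma betaSet_eq_image : betaSet N μ = (range N).image (μ.bead N) := rfl

lemma mem_betaSet {x : ℕ} : x ∈ betaSet N μ ↔ ∃ i < N, μ.bead N i = x := by
  simp [betaSet_eq_image]

lemma sum_betaSet (f : ℕ → ℕ) :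
    ∑ x ∈ betaSet N μ, f x = ∑ i ∈ range N, f (μ.bead N i) :=
  sum_image bead_injOn

lemma betaSet_succ (hN : μ.len ≤ N) :
    betaSet (N + 1) μ = insert 0 ((betaSet N μ).image (· + 1)) := by
  have h0 : μ.part N = 0 := μ.part_eq_zero_of_len_le hN
  rw [betaSet_eq_image, betaSet_eq_image, range_add_one, image_insert, image_image]
  congr 1
  · simp [bead, h0]
  · refine image_congr fun i hi => ?_
    simp only [coe_range, Set.mem_Iio] at hi
    simp only [bead, Function.comp_apply]
    omega

end PartitionNat

/-- On the `N`-bead abacus, adding a `p`-rim-hook moves the bead at `c` to the empty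
position `c + p`. -/
def raiseBead (p : ℕ) (S : Finset ℕ) (c : ℕ) : Finset ℕ := insert (c + p) (S.erase c)

def legLength (p : ℕ) (S : Finset ℕ) (c : ℕ) : ℕ := #(S.filter fun x => c < x ∧ x < c + p)

section Raise

variable {p c : ℕ} {S : Finset ℕ}

lemma sum_raiseBead (hc : c ∈ S) (hcp : c + p ∉ S) (f : ℕ → ℕ) :
    ∑ x ∈ raiseBead p S c, f x + f c = ∑ x ∈ S, f x + f (c + p) := by
  rw [raiseBead, sum_insert fun h => hcp (mem_of_mem_erase h), add_assoc, sum_erase_add _ _ hc,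
    add_comm]

lemma legLength_raiseBead (hc : c ∈ S) (hcp : c + p ∉ S) (d : ℕ) :
    legLength p (raiseBead p S c) d + (if d < c ∧ c < d + p then 1 else 0) =
      legLength p S d + (if c < d ∧ d < c + p then 1 else 0) := by
  rw [legLength, legLength, raiseBead, filter_insert, filter_erase]
  by_cases hwin : d < c ∧ c < d + p
  · have hcw : c ∈ S.filter fun x => d < x ∧ x < d + p := mem_filter.2 ⟨hc, hwin⟩
    rw [if_pos hwin, if_neg (by omega), if_neg (by omega), card_erase_of_mem hcw]
    have := card_pos.2 ⟨c, hcw⟩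
    omega
  · have hcw : c ∉ S.filter fun x => d < x ∧ x < d + p := fun h => hwin (mem_filter.1 h).2
    rw [if_neg hwin, erase_eq_of_notMem hcw]
    by_cases hwin' : c < d ∧ d < c + p
    · rw [if_pos (by omega), if_pos hwin', card_insert_of_notMem fun h => hcp (mem_filter.1 h).1]
    · rw [if_neg (by omega), if_neg hwin']

end Raise

structure IsHookAdd (p N : ℕ) (lam mu : PartitionNat) (c l : ℕ) : Prop where
  len_le_left : lam.len ≤ N
  len_le_right : mu.len ≤ N
  mem : c ∈ betaSet N mu
  add_notMem : c + p ∉ betaSet N mu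
  betaSet_eq : betaSet N lam = raiseBead p (betaSet N mu) c
  leg_eq : l = legLength p (betaSet N mu) c

section HookAdd

variable {p N c l : ℕ} {lam mu : PartitionNat}

lemma IsHookAdd.pos (h : IsHookAdd p N lam mu c l) : 0 < p :=
  Nat.pos_of_ne_zero fun hp => h.add_notMem (by simpa [hp] using h.mem)

lemma RemoveHook.exists_isHookAdd (h : RemoveHook p lam mu l) :
    ∃ N c, IsHookAdd p N lam mu c l := by
  obtain ⟨N, b, hlam, hmu, hb, hpb, hbp, hset, hl⟩ := h
  obtain ⟨c, rfl⟩ : ∃ c, b = c + p := ⟨b - p, by omega⟩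
  simp only [Nat.add_sub_cancel] at hbp hset hl
  have hp : p ≠ 0 := by rintro rfl; exact hbp hb
  refine ⟨N, c, hlam, hmu, by simp [hset], by simp [hset, hp], ?_, ?_⟩
  · ext x
    simp only [raiseBead, hset, mem_insert, mem_erase, mem_sdiff, mem_singleton]
    grind
  · rw [hl, legLength, hset]
    congr 1
    ext x
    simp only [mem_filter, mem_insert, mem_sdiff, mem_singleton]
    grind

lemma IsHookAdd.succ (h : IsHookAdd p N lam mu c l) : IsHookAdd p (N + 1) lam mu (c + 1) l := by
  have hlam := betaSet_succ h.len_le_left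
  have hmu := betaSet_succ h.len_le_right
  have hc := h.mem
  have hcp := h.add_notMem
  refine ⟨by have := h.len_le_left; omega, by have := h.len_le_right; omega, ?_, ?_, ?_, ?_⟩
  · simp [hmu, hc]
  · simp only [hmu, mem_insert, mem_image, not_or, not_exists, not_and]
    exact ⟨by omega, fun y hy hyc => hcp (by rwa [show y = c + p by omega] at hy)⟩
  · ext x
    simp only [hlam, hmu, h.betaSet_eq, raiseBead, mem_insert, mem_image, mem_erase]
    grind
  · rw [h.leg_eq, legLength, legLength, hmu, filter_insert, if_neg (by omega), filter_image,
      card_image_of_injective _ (add_left_injective 1)]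
    congr 1
    exact filter_congr fun x _ => by omega

lemma IsHookAdd.mono (h : IsHookAdd p N lam mu c l) {N' : ℕ} (hN : N ≤ N') :
    ∃ c', IsHookAdd p N' lam mu c' l := by
  induction N', hN using Nat.le_induction with
  | base => exact ⟨c, h⟩
  | succ n _ ih =>
    obtain ⟨c', h'⟩ := ih
    exact ⟨c' + 1, h'.succ⟩

end HookAdd

section Gaps

variable {S : Finset ℕ} {c y : ℕ}

def gapsBelow (S : Finset ℕ) (y : ℕ) : ℕ := #((range y).filter (· ∉ S))

lemma gapsBelow_add_card_filter_lt (S : Finset ℕ) (y : ℕ) :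
    gapsBelow S y + #(S.filter (· < y)) = y := by
  have hbeads : (range y).filter (· ∈ S) = S.filter (· < y) := by
    ext x
    simp only [mem_filter, mem_range]
    tauto
  rw [gapsBelow, ← hbeads, add_comm, card_filter_add_card_filter_not, card_range]

lemma gapsBelow_mono : Monotone (gapsBelow S) := fun _ _ h =>
  card_le_card (filter_subset_filter _ (range_subset_range.2 h))

lemma gapsBelow_lt_gapsBelow_iff (hc : c ∉ S) : gapsBelow S c < gapsBelow S y ↔ c < y := by
  have hsucc : gapsBelow S (c + 1) = gapsBelow S c + 1 := by
    rw [gapsBelow, range_add_one, filter_insert, if_pos hc, card_insert_of_notMem (by simp)]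
    rfl
  constructor
  · intro h
    by_contra hyc
    exact absurd (gapsBelow_mono (not_lt.1 hyc)) (not_le.2 h)
  · intro h
    have := gapsBelow_mono (S := S) (show c + 1 ≤ y by omega)
    omega

end Gaps

namespace PartitionNat

variable {N i c : ℕ} {μ : PartitionNat}

lemma card_betaSet : #(betaSet N μ) = N := by
  rw [betaSet_eq_image, card_image_of_injOn bead_injOn, card_range]

lemma card_filter_lt_bead (hi : i < N) :
    #((betaSet N μ).filter (· < μ.bead N i)) = N - 1 - i := by
  have hlt : (range N).filter (fun j => μ.bead N j < μ.bead N i) = Ioo i N := by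
    ext j
    simp only [mem_filter, mem_range, mem_Ioo]
    constructor
    · rintro ⟨hj, hji⟩
      exact ⟨lt_of_not_ge fun hij => absurd (bead_antitone hij) (not_le.2 hji), hj⟩
    · exact fun ⟨hij, hj⟩ => ⟨hj, bead_lt_bead hj hij⟩
  have hsub : (Ioo i N : Set ℕ) ⊆ range N :=
    coe_subset.2 fun j hj => mem_range.2 (mem_Ioo.1 hj).2
  rw [betaSet_eq_image, filter_image, hlt, card_image_of_injOn (bead_injOn.mono hsub),
    Nat.card_Ioo]
  omega

lemma part_eq_gapsBelow_bead (hi : i < N) : μ.part i = gapsBelow (betaSet N μ) (μ.bead N i) := by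
  have h := gapsBelow_add_card_filter_lt (betaSet N μ) (μ.bead N i)
  rw [card_filter_lt_bead hi] at h
  unfold bead at h ⊢
  omega

lemma conj_gapsBelow (hN : μ.len ≤ N) (hc : c ∉ betaSet N μ) :
    μ.conj (gapsBelow (betaSet N μ) c) = #((betaSet N μ).filter (c < ·)) := by
  have hrows : {i | gapsBelow (betaSet N μ) c + 1 ≤ μ.part i} =
      ↑((range N).filter fun i => c < μ.bead N i) := by
    ext i
    simp only [Set.mem_ofPred_eq, coe_filter, mem_range]
    constructor
    · intro h
      have hi : i < N := lt_of_lt_of_le (μ.lt_len_of_part_ne_zero (by omega)) hN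
      rw [part_eq_gapsBelow_bead hi, Nat.succ_le_iff, gapsBelow_lt_gapsBelow_iff hc] at h
      exact ⟨hi, h⟩
    · rintro ⟨hi, h⟩
      rw [part_eq_gapsBelow_bead hi, Nat.succ_le_iff, gapsBelow_lt_gapsBelow_iff hc]
      exact h
  rw [conj, hrows, Set.ncard_coe_finset, betaSet_eq_image, filter_image,
    card_image_of_injOn (bead_injOn.mono (coe_subset.2 (filter_subset _ _)))]

lemma isNode_gapsBelow_and_hook_eq (hN : μ.len ≤ N) (hi : i < N) (hc : c ∉ betaSet N μ)
    (hci : c < μ.bead N i) :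
    μ.IsNode i (gapsBelow (betaSet N μ) c) ∧
      μ.hook i (gapsBelow (betaSet N μ) c) = μ.bead N i - c := by
  have hpart := part_eq_gapsBelow_bead (μ := μ) hi
  have hgaps := gapsBelow_add_card_filter_lt (betaSet N μ) c
  have hsplit := card_filter_add_card_filter_not (s := betaSet N μ) (p := (c < ·))
  have hbelow : (betaSet N μ).filter (fun x => ¬ c < x) = (betaSet N μ).filter (· < c) :=
    filter_congr fun x hx => by
      have : x ≠ c := fun h => hc (h ▸ hx)
      omega
  rw [hbelow, card_betaSet] at hsplit
  refine ⟨?_, ?_⟩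
  · rw [IsNode, hpart]
    exact (gapsBelow_lt_gapsBelow_iff hc).2 hci
  · rw [hook, conj_gapsBelow hN hc]
    unfold bead at hci ⊢
    omega

lemma IsCore.sub_mem_betaSet {p b : ℕ} (hμ : IsCore p μ) (hN : μ.len ≤ N)
    (hb : b ∈ betaSet N μ) (hpb : p ≤ b) : b - p ∈ betaSet N μ := by
  by_contra hc
  obtain ⟨i, hi, rfl⟩ := mem_betaSet.1 hb
  have hp : 0 < p := Nat.pos_of_ne_zero fun hp => hc (by simpa [hp] using hb)
  obtain ⟨hnode, hhook⟩ := isNode_gapsBelow_and_hook_eq hN hi hc (by omega)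
  exact hμ i _ hnode (by rw [hhook, Nat.sub_sub_self hpb])

end PartitionNat

lemma card_filter_lt_eq_add {M : Finset ℕ} {u v : ℕ} (huv : u < v) :
    #(M.filter (u < ·)) =
      #(M.filter fun m => u < m ∧ m < v) + (if v ∈ M then 1 else 0) + #(M.filter (v < ·)) := by
  have hv : (if v ∈ M then 1 else 0) = ∑ m ∈ M, if m = v then 1 else 0 := by simp
  rw [hv, card_filter, card_filter, card_filter, ← sum_add_distrib, ← sum_add_distrib]
  exact sum_congr rfl fun m _ => by split_ifs <;> omega

lemma card_filter_Icc_eq_add {M : Finset ℕ} {a b : ℕ} (hab : a < b) :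
    #(M.filter fun m => a ≤ m ∧ m ≤ b) =
      #(M.filter fun m => a < m ∧ m < b) + (if a ∈ M then 1 else 0) +
        (if b ∈ M then 1 else 0) := by
  have ha : (if a ∈ M then 1 else 0) = ∑ m ∈ M, if m = a then 1 else 0 := by simp
  have hb : (if b ∈ M then 1 else 0) = ∑ m ∈ M, if m = b then 1 else 0 := by simp
  rw [ha, hb, card_filter, card_filter, ← sum_add_distrib, ← sum_add_distrib]
  exact sum_congr rfl fun m _ => by split_ifs <;> omega

/-- The shape of a partition obtained from the core by adding two `p`-rim-hooks at the beads
`a < b`, read off the top beads `M` of the core: `l` is the difference of the leg lengths. -/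
def IsLegPair (p : ℕ) (M : Finset ℕ) (a b l : ℕ) : Prop :=
  a < b ∧ (a ∈ M ∧ b ∈ M ∨ b = a + p ∧ (a ∈ M ∨ b ∈ M)) ∧
    l = #(M.filter fun m => a < m ∧ m < b) + if a + p < b then 1 else 0

lemma IsLegPair.lt_of_nested {p : ℕ} {M : Finset ℕ} {a b a' b' l l' : ℕ}
    (h : IsLegPair p M a b l) (h' : IsLegPair p M a' b' l') (ha : a < a') (hb : b' < b) :
    l' < l := by
  obtain ⟨-, -, rfl⟩ := h
  obtain ⟨hab', hmem', rfl⟩ := h'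
  have hsub : #(M.filter fun m => a' ≤ m ∧ m ≤ b') ≤ #(M.filter fun m => a < m ∧ m < b) :=
    card_le_card fun m hm => by
      simp only [mem_filter] at hm ⊢
      exact ⟨hm.1, by omega, by omega⟩
  rw [card_filter_Icc_eq_add hab'] at hsub
  rcases hmem' with ⟨ha', hb'⟩ | ⟨rfl, hb'⟩
  · rw [if_pos ha', if_pos hb'] at hsub
    split_ifs <;> omega
  · have hone : 1 ≤ (if a' ∈ M then 1 else 0) + (if a' + p ∈ M then 1 else 0) := by
      rcases hb' with h | h <;> simp [h]
    rw [if_neg (lt_irrefl _)]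
    split_ifs at * <;> omega

lemma add_le_of_lt_of_modEq {p a b : ℕ} (h : a < b) (hmod : a ≡ b [MOD p]) : a + p ≤ b := by
  have := Nat.le_of_dvd (by omega) ((Nat.modEq_iff_dvd' h.le).1 hmod)
  omega

/-- On the `p`-abacus `B` every runner is filled from the bottom, as for a `p`-core. -/
def SubClosed (p : ℕ) (B : Finset ℕ) : Prop := ∀ b ∈ B, p ≤ b → b - p ∈ B

def tops (p : ℕ) (B : Finset ℕ) : Finset ℕ := B.filter (· + p ∉ B)

section Abacus

variable {p : ℕ} {B : Finset ℕ}

lemma mem_tops {m : ℕ} : m ∈ tops p B ↔ m ∈ B ∧ m + p ∉ B := mem_filter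

lemma exists_mem_tops_modEq (hp : 0 < p) {x : ℕ} (hx : x ∈ B) :
    ∃ m ∈ tops p B, x ≤ m ∧ x ≡ m [MOD p] := by
  set C := B.filter (· ≡ x [MOD p])
  have hxC : x ∈ C := mem_filter.2 ⟨hx, Nat.ModEq.refl x⟩
  obtain ⟨hmB, hmx⟩ := mem_filter.1 (C.max'_mem ⟨x, hxC⟩)
  refine ⟨_, mem_tops.2 ⟨hmB, fun hmp => ?_⟩, C.le_max' x hxC, hmx.symm⟩
  have := C.le_max' _
    (mem_filter.2 ⟨hmp, (Nat.add_modEq_right (a := C.max' ⟨x, hxC⟩)).trans hmx⟩)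
  omega

lemma SubClosed.mem_of_le_of_modEq (hB : SubClosed p B) {x m : ℕ} (hm : m ∈ B) (hxm : x ≤ m)
    (hmod : x ≡ m [MOD p]) : x ∈ B := by
  obtain ⟨k, hk⟩ := (Nat.modEq_iff_dvd' hxm).1 hmod
  clear hmod
  induction k generalizing m with
  | zero => rwa [show x = m by rw [mul_zero] at hk; omega]
  | succ k ih =>
    rw [Nat.mul_succ] at hk
    exact ih (hB m hm (by omega)) (by omega) (by omega)

lemma SubClosed.eq_of_mem_tops (hB : SubClosed p B) {m m' : ℕ} (hm : m ∈ tops p B)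
    (hm' : m' ∈ tops p B) (hmod : m ≡ m' [MOD p]) : m = m' := by
  wlog hlt : m < m' generalizing m m'
  · rcases (not_lt.1 hlt).lt_or_eq with h | h
    · exact (this hm' hm hmod.symm h).symm
    · exact h.symm
  exact absurd (hB.mem_of_le_of_modEq (mem_tops.1 hm').1 (add_le_of_lt_of_modEq hlt hmod)
    (Nat.add_modEq_right.trans hmod)) (mem_tops.1 hm).2

lemma eq_of_modEq_of_lt_add {a b : ℕ} (hmod : a ≡ b [MOD p]) (hab : a ≤ b) (hb : b < a + p) :
    a = b := by
  rcases hab.lt_or_eq with h | h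
  · exact absurd (add_le_of_lt_of_modEq h hmod) (by omega)
  · exact h

lemma add_one_add_mod_modEq {u m : ℕ} (hum : u < m) : u + 1 + (m - u - 1) % p ≡ m [MOD p] := by
  have := (Nat.mod_modEq (m - u - 1) p).add_left (u + 1)
  rwa [show u + 1 + (m - u - 1) = m by omega] at this

/-- The window `(u, u + p)` meets every runner other than that of `u` exactly once, and
that position holds a bead iff the runner's top bead lies above `u`. -/
lemma SubClosed.legLength_eq (hB : SubClosed p B) (hp : 0 < p) (u : ℕ) :
    legLength p B u = #((tops p B).filter fun m => u < m ∧ ¬ m ≡ u [MOD p]) := by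
  symm
  refine card_bij (fun m _ => u + 1 + (m - u - 1) % p) (fun m hm => ?_) (fun m hm m' hm' h => ?_)
    (fun x hx => ?_)
  all_goals simp only [mem_filter] at *
  · obtain ⟨hmt, hum, hmu⟩ := hm
    have hmod := add_one_add_mod_modEq (p := p) hum
    have hlt : (m - u - 1) % p < p := Nat.mod_lt _ hp
    have hne : (m - u - 1) % p ≠ p - 1 := fun h => hmu <| hmod.symm.trans <| by
      rw [h, show u + 1 + (p - 1) = u + p by omega]
      exact Nat.add_modEq_right
    refine ⟨hB.mem_of_le_of_modEq (mem_tops.1 hmt).1 ?_ hmod, by omega, by omega⟩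
    have := Nat.mod_le (m - u - 1) p
    omega
  · have h1 := add_one_add_mod_modEq (p := p) hm.2.1
    have h2 := add_one_add_mod_modEq (p := p) hm'.2.1
    exact hB.eq_of_mem_tops hm.1 hm'.1 (h1.symm.trans (h ▸ h2))
  · obtain ⟨hxB, hux, hxu⟩ := hx
    obtain ⟨m, hmt, hxm, hmod⟩ := exists_mem_tops_modEq hp hxB
    have hxu' : ¬ x ≡ u [MOD p] := fun h =>
      absurd (eq_of_modEq_of_lt_add h.symm hux.le hxu) (by omega)
    refine ⟨m, ⟨hmt, by omega, fun h => hxu' (hmod.trans h)⟩, ?_⟩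
    have hw := add_one_add_mod_modEq (p := p) (show u < m by omega)
    have := Nat.mod_lt (m - u - 1) hp
    rcases le_total x (u + 1 + (m - u - 1) % p) with h | h
    · exact (eq_of_modEq_of_lt_add (hmod.trans hw.symm) h (by omega)).symm
    · exact eq_of_modEq_of_lt_add (hw.trans hmod.symm) h (by omega)

/-- Counting the top beads above `u` also counts the top bead `c` of `u`'s own runner when it
lies above `u`; `legLength` does not. -/
lemma SubClosed.legLength_add_ite (hB : SubClosed p B) (hp : 0 < p) {c u : ℕ}
    (hc : c ∈ tops p B) (hcu : c ≡ u [MOD p]) :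
    legLength p B u + (if u < c then 1 else 0) = #((tops p B).filter (u < ·)) := by
  have hrun :
      (tops p B).filter (fun m => u < m ∧ m ≡ u [MOD p]) = if u < c then {c} else ∅ := by
    ext m
    simp only [mem_filter]
    constructor
    · rintro ⟨hm, hum, hmu⟩
      obtain rfl := hB.eq_of_mem_tops hm hc (hmu.trans hcu.symm)
      simp [hum]
    · split_ifs with huc <;> simp_all
  rw [hB.legLength_eq hp, ← card_filter_add_card_filter_not (s := (tops p B).filter (u < ·))
    (p := (· ≡ u [MOD p])), filter_filter, filter_filter, hrun, add_comm]
  split_ifs <;> simp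

/-- The cases `d = c + p`, `d + p = c` and `d ∈ tops p B` give the partitions written
`⟨i⟩`, `⟨i²⟩` and `⟨i, j⟩` of the block. -/
lemma SubClosed.isLegPair_of_raiseBead (hB : SubClosed p B) (hp : 0 < p) {c d : ℕ}
    (hc : c ∈ tops p B) (hd : d ∈ raiseBead p B c) (hdp : d + p ∉ raiseBead p B c) :
    ∃ a b, (a = c ∧ b = d ∨ a = d ∧ b = c) ∧
      IsLegPair p (tops p B) a b
        (max (legLength p (raiseBead p B c) d) (legLength p B c) -
          min (legLength p (raiseBead p B c) d) (legLength p B c)) := by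
  obtain ⟨hcB, hcpB⟩ := mem_tops.1 hc
  have hmove := legLength_raiseBead hcB hcpB d
  have hlegc := hB.legLength_add_ite hp hc (Nat.ModEq.refl c)
  rw [if_neg (lt_irrefl c)] at hlegc
  simp only [raiseBead, mem_insert, mem_erase, not_or, not_and] at hd hdp
  rcases hd with rfl | ⟨hdc, hdB⟩
  · have hlegd := hB.legLength_add_ite hp hc Nat.add_modEq_right.symm
    have hsplit := card_filter_lt_eq_add (M := tops p B) (show c < c + p by omega)
    refine ⟨c, c + p, Or.inl ⟨rfl, rfl⟩, by omega, Or.inr ⟨rfl, Or.inl hc⟩, ?_⟩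
    simp only [mem_tops, hcpB, false_and] at hsplit
    split_ifs at * <;> omega
  by_cases hdpc : d + p = c
  · subst hdpc
    have hlegd := hB.legLength_add_ite hp hc Nat.add_modEq_right
    have hsplit := card_filter_lt_eq_add (M := tops p B) (show d < d + p by omega)
    refine ⟨d, d + p, Or.inr ⟨rfl, rfl⟩, by omega, Or.inr ⟨rfl, Or.inr hc⟩, ?_⟩
    simp only [hc] at hsplit
    split_ifs at * <;> omega
  have hdt : d ∈ tops p B := mem_tops.2 ⟨hdB, fun h => hdp.2 (by omega) h⟩
  have hlegd := hB.legLength_add_ite hp hdt (Nat.ModEq.refl d)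
  rw [if_neg (lt_irrefl d)] at hlegd
  rcases lt_or_gt_of_ne hdc with hdc | hcd
  · have hsplit := card_filter_lt_eq_add (M := tops p B) hdc
    refine ⟨d, c, Or.inr ⟨rfl, rfl⟩, hdc, Or.inl ⟨hdt, hc⟩, ?_⟩
    simp only [hc] at hsplit
    split_ifs at * <;> omega
  · have hsplit := card_filter_lt_eq_add (M := tops p B) hcd
    have hdcp : d ≠ c + p := fun h => hcpB (h ▸ hdB)
    refine ⟨c, d, Or.inl ⟨rfl, rfl⟩, hcd, Or.inl ⟨hc, hdt⟩, ?_⟩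
    simp only [hdt] at hsplit
    split_ifs at * <;> omega

end Abacus

lemma sum_le_sum_of_sum_tsub_le {ι : Type*} {s : Finset ι} {x y : ι → ℕ} {t : ℕ}
    (hy : ∀ i ∈ s, t ≤ y i) (h : ∑ i ∈ s, (x i - t) ≤ ∑ i ∈ s, (y i - t)) :
    ∑ i ∈ s, x i ≤ ∑ i ∈ s, y i :=
  calc ∑ i ∈ s, x i ≤ ∑ i ∈ s, (x i - t + t) := sum_le_sum fun i _ => le_tsub_add
    _ = ∑ i ∈ s, (x i - t) + #s * t := by rw [sum_add_distrib, sum_const, smul_eq_mul]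
    _ ≤ ∑ i ∈ s, (y i - t) + #s * t := by gcongr
    _ = ∑ i ∈ s, y i := by
      rw [← smul_eq_mul, ← sum_const, ← sum_add_distrib]
      exact sum_congr rfl fun i hi => Nat.sub_add_cancel (hy i hi)

namespace PartitionNat

variable {N : ℕ} {lam mu : PartitionNat}

lemma sum_range_part_of_len_le (μ : PartitionNat) (hN : μ.len ≤ N) {k : ℕ} (hk : N ≤ k) :
    ∑ i ∈ range k, μ.part i = ∑ i ∈ range N, μ.part i :=
  (sum_subset (range_subset_range.2 hk) fun i _ hi =>
    μ.part_eq_zero_of_len_le (by simp only [mem_range, not_lt] at hi; omega)).symm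

lemma dom_of_sum_range_bead_le (hlam : lam.len ≤ N) (hmu : mu.len ≤ N)
    (h : ∀ k ≤ N, ∑ i ∈ range k, lam.bead N i ≤ ∑ i ∈ range k, mu.bead N i) :
    Dom lam mu := by
  have hpart : ∀ k ≤ N, ∑ i ∈ range k, lam.part i ≤ ∑ i ∈ range k, mu.part i := by
    intro k hk
    have := h k hk
    simp only [bead, sum_add_distrib] at this
    omega
  intro k
  rcases le_total k N with hk | hk
  · exact hpart k hk
  · rw [lam.sum_range_part_of_len_le hlam hk, mu.sum_range_part_of_len_le hmu hk]
    exact hpart N le_rfl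

/-- Comparing the sums `∑ (x - t)` over the beads for every threshold `t` decides dominance:
for `t` the `k`-th largest bead of `mu` they compare the `k` largest beads. -/
lemma dom_of_sum_tsub_le (hlam : lam.len ≤ N) (hmu : mu.len ≤ N)
    (h : ∀ t, ∑ x ∈ betaSet N lam, (x - t) ≤ ∑ x ∈ betaSet N mu, (x - t)) :
    Dom lam mu := by
  refine dom_of_sum_range_bead_le hlam hmu fun k hk => ?_
  set t := mu.bead N (k - 1)
  refine sum_le_sum_of_sum_tsub_le (t := t)
    (fun i hi => mu.bead_antitone (by simp only [mem_range] at hi; omega)) ?_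
  calc ∑ i ∈ range k, (lam.bead N i - t) ≤ ∑ i ∈ range N, (lam.bead N i - t) :=
        sum_le_sum_of_subset (range_subset_range.2 hk)
    _ ≤ ∑ i ∈ range N, (mu.bead N i - t) := by simpa only [sum_betaSet] using h t
    _ = ∑ i ∈ range k, (mu.bead N i - t) := by
        refine (sum_subset (range_subset_range.2 hk) fun i _ hi => ?_).symm
        have := mu.bead_antitone (N := N)
          (show k - 1 ≤ i by simp only [mem_range, not_lt] at hi; omega)
        omega

end PartitionNat

/-- `sum_eq` says that `betaSet N lam + {a, b} = betaSet N γ + {a + p, b + p}` as multisets. -/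
structure IsTwoHookShape (p N : ℕ) (γ lam : PartitionNat) (l a b : ℕ) : Prop where
  len_le : lam.len ≤ N
  sum_eq : ∀ f : ℕ → ℕ,
    ∑ x ∈ betaSet N lam, f x + f a + f b = ∑ x ∈ betaSet N γ, f x + f (a + p) + f (b + p)
  isLegPair : IsLegPair p (tops p (betaSet N γ)) a b l

namespace IsTwoHookShape

variable {p N l l' a b a' b' : ℕ} {γ lam mu : PartitionNat}

lemma dom (h : IsTwoHookShape p N γ lam l a b) (h' : IsTwoHookShape p N γ mu l' a' b')
    (ha : a ≤ a') (hb : b ≤ b') : Dom lam mu :=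
  dom_of_sum_tsub_le h.len_le h'.len_le fun t => by
    have e := h.sum_eq (· - t)
    have e' := h'.sum_eq (· - t)
    omega

lemma dom_or_dom (h : IsTwoHookShape p N γ lam l a b) (h' : IsTwoHookShape p N γ mu l a' b') :
    Dom lam mu ∨ Dom mu lam := by
  by_cases hle : a ≤ a' ∧ b ≤ b'
  · exact Or.inl (h.dom h' hle.1 hle.2)
  by_cases hle' : a' ≤ a ∧ b' ≤ b
  · exact Or.inr (h'.dom h hle'.1 hle'.2)
  exfalso
  rcases lt_or_ge a a' with ha | ha
  · exact (h.isLegPair.lt_of_nested h'.isLegPair ha (by omega)).ne rfl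
  · exact (h'.isLegPair.lt_of_nested h.isLegPair (by omega) (by omega)).ne rfl

end IsTwoHookShape

lemma DelClass.exists_isTwoHookShape {p l : ℕ} {γ lam : PartitionNat} (hγ : IsCore p γ)
    (h : DelClass p γ l lam) :
    ∃ N₀, ∀ N ≥ N₀, ∃ a b, IsTwoHookShape p N γ lam l a b := by
  obtain ⟨-, mu, l₁, l₂, hr₁, hr₂, rfl⟩ := h
  obtain ⟨N₁, d₁, hd₁⟩ := hr₁.exists_isHookAdd
  obtain ⟨N₂, c₂, hc₂⟩ := hr₂.exists_isHookAdd
  refine ⟨max N₁ N₂, fun N hN => ?_⟩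
  obtain ⟨d, hd⟩ := hd₁.mono (le_of_max_le_left hN)
  obtain ⟨c, hc⟩ := hc₂.mono (le_of_max_le_right hN)
  have hp := hc.pos
  have hB : SubClosed p (betaSet N γ) := fun _ => hγ.sub_mem_betaSet hc.len_le_right
  have hct : c ∈ tops p (betaSet N γ) := mem_tops.2 ⟨hc.mem, hc.add_notMem⟩
  have hdm := hd.mem
  have hdpm := hd.add_notMem
  rw [hc.betaSet_eq] at hdm hdpm
  obtain ⟨a, b, hab, hpair⟩ := hB.isLegPair_of_raiseBead hp hct hdm hdpm
  refine ⟨a, b, hd.len_le_left, fun f => ?_, ?_⟩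
  · have e₁ := sum_raiseBead hd.mem hd.add_notMem f
    have e₂ := sum_raiseBead hc.mem hc.add_notMem f
    rw [← hd.betaSet_eq] at e₁
    rw [← hc.betaSet_eq] at e₂
    rcases hab with ⟨rfl, rfl⟩ | ⟨rfl, rfl⟩ <;> omega
  · rwa [hd.leg_eq, hc.leg_eq, hc.betaSet_eq]

theorem stmt10_general (p : ℕ) (γ : PartitionNat) (hγ : IsCore p γ) :
    ∀ l, l ≤ p - 1 → ∀ lam mu : PartitionNat,
      DelClass p γ l lam → DelClass p γ l mu → Dom lam mu ∨ Dom mu lam := by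
  intro l _ lam mu hlam hmu
  obtain ⟨N₁, h₁⟩ := hlam.exists_isTwoHookShape hγ
  obtain ⟨N₂, h₂⟩ := hmu.exists_isTwoHookShape hγ
  obtain ⟨a, b, hab⟩ := h₁ (max N₁ N₂) (le_max_left _ _)
  obtain ⟨a', b', hab'⟩ := h₂ (max N₁ N₂) (le_max_right _ _)
  exact hab.dom_or_dom hab'

/-- each set `∂_l` (`0 ≤ l ≤ p−1`) is totally ordered by the
dominance order. -/
theorem stmt10 (p : ℕ) (hp : p.Prime) (hodd : Odd p)
    (γ : PartitionNat) (hγ : IsCore p γ) (hsc : SelfConj γ) :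
    ∀ l, l ≤ p - 1 → ∀ lam mu : PartitionNat,
      DelClass p γ l lam → DelClass p γ l mu → Dom lam mu ∨ Dom mu lam :=
  stmt10_general p γ hγ

end ArxivW2
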